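/- Let n ≥ 3 and let λ₁, …, λₙ be real numbers with Σᵢ λᵢ = 0. Then (Σᵢ λᵢ³)² ≤ ((n-2)²/(n(n-1))) · (Σᵢ λᵢ²)³. -/

import Mathlib

/-!
Normalize `∑ λᵢ² = n(n-1)B²` with `B ≥ 0`. Since `∑ λᵢ = 0`, Cauchy–Schwarz on the other
coordinates gives `λᵢ ≤ (n-1)B =: M`. On `x ≤ M` the cubic `x³` lies below the quadratic that
is tangent to it at `x = -B` and meets it at `x = M`; summing this bound over the `λᵢ` uses
only `∑ λᵢ`, `∑ λᵢ²` and `n`, and gives `∑ λᵢ³ ≤ n(n-1)(n-2)B³`, which is attained by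
`λ = (M, -B, …, -B)`. Applying it to `-λ` as well and squaring yields the claim.
-/

open Finset

section

variable {ι : Type*} [Fintype ι]

theorem card_mul_sq_le_of_sum_eq_zero {x : ι → ℝ} (hx : ∑ i, x i = 0) (i : ι) :
    (Fintype.card ι : ℝ) * x i ^ 2 ≤ (Fintype.card ι - 1) * ∑ j, x j ^ 2 := by
  classical
  have hsum : ∑ j ∈ univ.erase i, x j = -x i := by
    linarith [sum_erase_add univ x (mem_univ i)]
  have hsum_sq : ∑ j ∈ univ.erase i, x j ^ 2 = ∑ j, x j ^ 2 - x i ^ 2 := by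
    linarith [sum_erase_add univ (fun j => x j ^ 2) (mem_univ i)]
  have hcs := sq_sum_le_card_mul_sum_sq (s := univ.erase i) (f := x)
  rw [hsum, hsum_sq, card_erase_of_mem (mem_univ i), card_univ,
    Nat.cast_pred (Fintype.card_pos_iff.mpr ⟨i⟩)] at hcs
  linarith

-- The difference of the two sides is `(M - x) * (x + B) ^ 2`.
theorem cube_le_of_le {x M : ℝ} (B : ℝ) (hx : x ≤ M) :
    x ^ 3 ≤ (M - 2 * B) * x ^ 2 + (2 * M * B - B ^ 2) * x + M * B ^ 2 := by
  nlinarith [mul_nonneg (sub_nonneg.mpr hx) (sq_nonneg (x + B))]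

theorem sum_cube_le_of_sum_eq_zero {x : ι → ℝ} (hx : ∑ i, x i = 0) {B : ℝ} (hB : 0 ≤ B)
    (hsq : ∑ i, x i ^ 2 = Fintype.card ι * (Fintype.card ι - 1) * B ^ 2) :
    ∑ i, x i ^ 3 ≤ Fintype.card ι * (Fintype.card ι - 1) * (Fintype.card ι - 2) * B ^ 3 := by
  set n : ℝ := (Fintype.card ι : ℝ)
  have hle : ∀ i, x i ≤ (n - 1) * B := by
    intro i
    have hn : 1 ≤ n := Nat.one_le_cast.mpr (Fintype.card_pos_iff.mpr ⟨i⟩)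
    have hbound := card_mul_sq_le_of_sum_eq_zero hx i
    rw [hsq] at hbound
    have hsq_le : x i ^ 2 ≤ ((n - 1) * B) ^ 2 := by nlinarith
    exact (abs_le_of_sq_le_sq' hsq_le (by positivity)).2
  calc ∑ i, x i ^ 3
      ≤ ∑ i, (((n - 1) * B - 2 * B) * x i ^ 2 + (2 * ((n - 1) * B) * B - B ^ 2) * x i
          + (n - 1) * B * B ^ 2) :=
        sum_le_sum fun i _ => cube_le_of_le B (hle i)
    _ = ((n - 1) * B - 2 * B) * ∑ i, x i ^ 2 + (2 * ((n - 1) * B) * B - B ^ 2) * ∑ i, x i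
          + n * ((n - 1) * B * B ^ 2) := by
        rw [sum_add_distrib, sum_add_distrib, ← mul_sum, ← mul_sum, sum_const, card_univ,
          nsmul_eq_mul]
    _ = n * (n - 1) * (n - 2) * B ^ 3 := by
        rw [hsq, hx]
        ring

theorem sq_sum_cube_le_of_sum_eq_zero {x : ι → ℝ} (hx : ∑ i, x i = 0) {B : ℝ} (hB : 0 ≤ B)
    (hsq : ∑ i, x i ^ 2 = Fintype.card ι * (Fintype.card ι - 1) * B ^ 2) :
    (∑ i, x i ^ 3) ^ 2 ≤
      (Fintype.card ι * (Fintype.card ι - 1) * (Fintype.card ι - 2) * B ^ 3) ^ 2 := by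
  have hupper := sum_cube_le_of_sum_eq_zero hx hB hsq
  have hlower := sum_cube_le_of_sum_eq_zero (x := -x) (by simpa using hx) hB (by simpa using hsq)
  simp only [Pi.neg_apply, Odd.neg_pow (by decide : Odd 3), sum_neg_distrib] at hlower
  exact sq_le_sq' (by linarith) hupper

end

theorem cubic_power_sum_bound_homogeneous (n : ℕ) (hn : 3 ≤ n) (lam : Fin n → ℝ)
    (h1 : ∑ i, lam i = 0) :
    (∑ i, (lam i) ^ 3) ^ 2 ≤
      (((n : ℝ) - 2) ^ 2 / ((n : ℝ) * ((n : ℝ) - 1))) * (∑ i, (lam i) ^ 2) ^ 3 := by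
  set p := ∑ i, lam i ^ 2
  have hd : 0 < (n : ℝ) * ((n : ℝ) - 1) := by
    have : (3 : ℝ) ≤ n := by exact_mod_cast hn
    nlinarith
  set B := √(p / ((n : ℝ) * ((n : ℝ) - 1)))
  have hB2 : B ^ 2 = p / ((n : ℝ) * ((n : ℝ) - 1)) :=
    Real.sq_sqrt (div_nonneg (sum_nonneg fun i _ => sq_nonneg _) hd.le)
  have hp : p = (n : ℝ) * ((n : ℝ) - 1) * B ^ 2 := by
    rw [hB2, mul_div_cancel₀ _ hd.ne']
  have key := sq_sum_cube_le_of_sum_eq_zero h1 (Real.sqrt_nonneg _)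
    (by simpa only [Fintype.card_fin] using hp)
  simp only [Fintype.card_fin] at key
  calc (∑ i, lam i ^ 3) ^ 2 ≤ ((n : ℝ) * ((n : ℝ) - 1) * ((n : ℝ) - 2) * B ^ 3) ^ 2 := key
    _ = _ := by
      rw [hp]
      field_simp
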